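/- arXiv:2109.10558 — 5 statements merged into one kernel-verified Lean document; each statement's English description precedes it below -/
import Mathlib

section
/- Let k be an algebraically closed field whose characteristic is neither 2 nor 3. For (s,t) in k^2 with (s,t) ≠ (0,0), let G_{s,t} = s(Y^2 - Z^2)(X + Y) + t(X^2 - Z^2)(Y - X), a homogeneous cubic in k[X,Y,Z]. Then there exists a nonzero triple (x,y,z) in k^3 at which G_{s,t} and its three partial derivatives ∂G/∂X, ∂G/∂Y, ∂G/∂Z all vanish if and only if s·t·(t^2 + 11st - s^2) = 0. -/
open MvPolynomial

/-- The pencil of cubics `G_{s,t} = s(Y² - Z²)(X + Y) + t(X² - Z²)(Y - X)` in `k[X,Y,Z]`,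
with variables `X 0 = X`, `X 1 = Y`, `X 2 = Z`. -/
noncomputable def Gpencil (k : Type*) [CommRing k] (s t : k) : MvPolynomial (Fin 3) k :=
  C s * ((X 1) ^ 2 - (X 2) ^ 2) * (X 0 + X 1) + C t * ((X 0) ^ 2 - (X 2) ^ 2) * (X 1 - X 0)

section EvalLemmas

variable {k : Type*} [CommRing k]

lemma evalG (s t x y z : k) : eval ![x,y,z] (Gpencil k s t)
    = s*(y^2-z^2)*(x+y) + t*(x^2-z^2)*(y-x) := by
  simp [Gpencil]

lemma evalGX (s t x y z : k) : eval ![x,y,z] (pderiv 0 (Gpencil k s t))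
    = s*(y^2-z^2) + t*(2*x*y - 3*x^2 + z^2) := by
  simp [Gpencil, pderiv_mul, pderiv_pow, pderiv_X, Pi.single_apply]
  ring

lemma evalGY (s t x y z : k) : eval ![x,y,z] (pderiv 1 (Gpencil k s t))
    = s*(2*x*y + 3*y^2 - z^2) + t*(x^2-z^2) := by
  simp [Gpencil, pderiv_mul, pderiv_pow, pderiv_X, Pi.single_apply]
  ring

lemma evalGZ (s t x y z : k) : eval ![x,y,z] (pderiv 2 (Gpencil k s t))
    = -2*z*(s*(x+y) + t*(y-x)) := by
  simp [Gpencil, pderiv_mul, pderiv_pow, pderiv_X, Pi.single_apply]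
  ring

end EvalLemmas

/-- Let `k` be an algebraically closed field whose characteristic is neither 2 nor 3.
For `(s,t) ≠ (0,0)`, the cubic `G_{s,t}` has a singular point (a nonzero common zero of `G_{s,t}`
and its three partial derivatives) if and only if `s·t·(t² + 11st - s²) = 0`. -/
theorem stmt_1 (k : Type*) [Field k] [IsAlgClosed k]
    (h2 : ringChar k ≠ 2) (h3 : ringChar k ≠ 3)
    (s t : k) (hst : (s, t) ≠ (0, 0)) :
    (∃ x y z : k, ¬(x = 0 ∧ y = 0 ∧ z = 0) ∧
      eval ![x, y, z] (Gpencil k s t) = 0 ∧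
      eval ![x, y, z] (pderiv 0 (Gpencil k s t)) = 0 ∧
      eval ![x, y, z] (pderiv 1 (Gpencil k s t)) = 0 ∧
      eval ![x, y, z] (pderiv 2 (Gpencil k s t)) = 0) ↔
    s * t * (t ^ 2 + 11 * s * t - s ^ 2) = 0 := by
  have h2k : (2:k) ≠ 0 := by
    intro h
    have hd := ringChar.dvd (show ((2:ℕ):k) = 0 by exact_mod_cast h)
    have := Nat.le_of_dvd (by norm_num) hd
    have h1 : ringChar k ≠ 1 := CharP.ringChar_ne_one
    have h0 : ringChar k ≠ 0 := by intro h0; rw [h0] at hd; simp at hd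
    omega
  have h3k : (3:k) ≠ 0 := by
    intro h
    have hd := ringChar.dvd (show ((3:ℕ):k) = 0 by exact_mod_cast h)
    have := Nat.le_of_dvd (by norm_num) hd
    have h1 : ringChar k ≠ 1 := CharP.ringChar_ne_one
    have h0 : ringChar k ≠ 0 := by intro h0; rw [h0] at hd; simp at hd
    interval_cases hc : ringChar k <;> omega
  have h6k : (6:k) ≠ 0 := by
    have : (6:k) = 2 * 3 := by norm_num
    rw [this]; exact mul_ne_zero h2k h3k
  constructor
  · rintro ⟨x, y, z, hnz, hG, hX, hY, hZ⟩
    rw [evalG] at hG; rw [evalGX] at hX; rw [evalGY] at hY; rw [evalGZ] at hZ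
    by_contra hcon
    have hs : s ≠ 0 := fun h => hcon (by rw [h]; ring)
    have ht : t ≠ 0 := fun h => hcon (by rw [h]; ring)
    have hcub : t ^ 2 + 11 * s * t - s ^ 2 ≠ 0 := fun h => hcon (by rw [h]; ring)
    -- from ∂Z : z = 0 or L = 0
    have hZ' : z = 0 ∨ s*(x+y) + t*(y-x) = 0 := by
      rcases mul_eq_zero.mp (show z * (s*(x+y) + t*(y-x)) = 0 by
        apply mul_left_cancel₀ (show (-2:k) ≠ 0 by simpa using h2k)
        rw [mul_zero]; linear_combination hZ) with h | h
      · exact Or.inl h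
      · exact Or.inr h
    rcases hZ' with rfl | hL
    · -- z = 0 case
      by_cases hx : x = 0
      · subst hx
        have hy : y = 0 := by
          have : s * y^2 = 0 := by linear_combination hX
          rcases mul_eq_zero.mp this with h | h
          · exact absurd h hs
          · exact pow_eq_zero_iff (n := 2) (by norm_num) |>.mp h
        exact hnz ⟨rfl, hy, rfl⟩
      · have key : (6:k) * (s * (y * (x^2 + x*y - y^2))) = 0 := by
          linear_combination x * hX - (2*y - 3*x) * hY
        have key2 : y * (x^2 + x*y - y^2) = 0 := by
          rcases mul_eq_zero.mp key with h | h
          · exact absurd h h6k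
          · rcases mul_eq_zero.mp h with h' | h'
            · exact absurd h' hs
            · exact h'
        rcases mul_eq_zero.mp key2 with hy | hq
        · -- y = 0 : then -3 t x^2 = 0, contradiction
          subst hy
          have : (3:k) * (t * x^2) = 0 := by linear_combination -hX
          rcases mul_eq_zero.mp this with h | h
          · exact absurd h h3k
          · rcases mul_eq_zero.mp h with h' | h'
            · exact absurd h' ht
            · exact hx (pow_eq_zero_iff (n := 2) (by norm_num) |>.mp h')
        · -- x² + xy - y² = 0
          have htx : x * (t*x + s*(5*y + 3*x)) = 0 := by
            linear_combination hY + 3*s*hq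
          have htx' : t*x + s*(5*y + 3*x) = 0 := by
            rcases mul_eq_zero.mp htx with h | h
            · exact absurd h hx
            · exact h
          have hfin : (t^2 + 11*s*t - s^2) * x^2 = 0 := by
            linear_combination (t*x - s*(5*y+3*x) + 11*s*x) * htx' - 25*s^2*hq
          rcases mul_eq_zero.mp hfin with h | h
          · exact hcub h
          · exact hx (pow_eq_zero_iff (n := 2) (by norm_num) |>.mp h)
    · -- L = 0 case
      have hA : (2:k) * (t * (2*x^2 - y^2 - z^2)) = 0 := by
        linear_combination hY - hX - 2*y*hL
      have hB : (2:k) * (s * (2*y^2 - x^2 - z^2)) = 0 := by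
        linear_combination hX + hY - 2*x*hL
      have hA' : 2*x^2 - y^2 - z^2 = 0 := by
        rcases mul_eq_zero.mp hA with h | h
        · exact absurd h h2k
        · rcases mul_eq_zero.mp h with h' | h'
          · exact absurd h' ht
          · exact h'
      have hB' : 2*y^2 - x^2 - z^2 = 0 := by
        rcases mul_eq_zero.mp hB with h | h
        · exact absurd h h2k
        · rcases mul_eq_zero.mp h with h' | h'
          · exact absurd h' hs
          · exact h'
      have hxy : (3:k) * ((x - y) * (x + y)) = 0 := by linear_combination hA' - hB'
      have hxy' : (x - y) * (x + y) = 0 := by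
        rcases mul_eq_zero.mp hxy with h | h
        · exact absurd h h3k
        · exact h
      have hx0 : x = 0 := by
        rcases mul_eq_zero.mp hxy' with h | h
        · -- x = y, then L gives 2 s x = 0
          have hy : y = x := by linear_combination -h
          have : (2:k) * (s * x) = 0 := by rw [hy] at hL; linear_combination hL
          rcases mul_eq_zero.mp this with h' | h'
          · exact absurd h' h2k
          · rcases mul_eq_zero.mp h' with h'' | h''
            · exact absurd h'' hs
            · exact h''
        · -- y = -x, then L gives -2 t x = 0
          have hy : y = -x := by linear_combination h
          have : (2:k) * (t * x) = 0 := by rw [hy] at hL; linear_combination -hL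
          rcases mul_eq_zero.mp this with h' | h'
          · exact absurd h' h2k
          · rcases mul_eq_zero.mp h' with h'' | h''
            · exact absurd h'' ht
            · exact h''
      have hy0 : y = 0 := by
        rcases mul_eq_zero.mp hxy' with h | h
        · linear_combination -h + hx0
        · linear_combination h - hx0
      have hz0 : z = 0 := by
        have : z^2 = 0 := by rw [hx0, hy0] at hA'; linear_combination -hA'
        exact pow_eq_zero_iff (n := 2) (by norm_num) |>.mp this
      exact hnz ⟨hx0, hy0, hz0⟩
  · intro h
    rcases mul_eq_zero.mp h with h' | hcub
    · rcases mul_eq_zero.mp h' with hs | ht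
      · -- s = 0 : point (1,1,1)
        refine ⟨1, 1, 1, by simp, ?_, ?_, ?_, ?_⟩ <;>
          rw [hs] <;> first
            | (rw [evalG]; ring) | (rw [evalGX]; ring) | (rw [evalGY]; ring)
            | (rw [evalGZ]; ring)
      · -- t = 0 : point (-1,1,1)
        refine ⟨-1, 1, 1, by simp, ?_, ?_, ?_, ?_⟩ <;>
          rw [ht] <;> first
            | (rw [evalG]; ring) | (rw [evalGX]; ring) | (rw [evalGY]; ring)
            | (rw [evalGZ]; ring)
    · -- t² + 11st - s² = 0 : point (1, ρ, 0) with ρ² = ρ + 1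
      have hdeg : (Polynomial.X^2 - Polynomial.X - 1 : Polynomial k).degree = 2 := by
        compute_degree!
      obtain ⟨r, hr⟩ := IsAlgClosed.exists_root (k := k)
        (p := Polynomial.X^2 - Polynomial.X - 1) (by rw [hdeg]; norm_num)
      simp [Polynomial.IsRoot] at hr
      have hroot : r^2 = r + 1 := by linear_combination hr
      have hfac : (t + s*(5*r + 3)) * (t + s*(8 - 5*r)) = 0 := by
        linear_combination hcub - 25*s^2*hroot
      have main : ∀ ρ : k, ρ^2 = ρ + 1 → t + s*(5*ρ + 3) = 0 →
          (∃ x y z : k, ¬(x = 0 ∧ y = 0 ∧ z = 0) ∧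
            eval ![x, y, z] (Gpencil k s t) = 0 ∧
            eval ![x, y, z] (pderiv 0 (Gpencil k s t)) = 0 ∧
            eval ![x, y, z] (pderiv 1 (Gpencil k s t)) = 0 ∧
            eval ![x, y, z] (pderiv 2 (Gpencil k s t)) = 0) := by
        intro ρ hρ hT
        refine ⟨1, ρ, 0, by simp, ?_, ?_, ?_, ?_⟩
        · rw [evalG]; linear_combination (ρ - 1) * hT + (s*ρ - 3*s) * hρ
        · rw [evalGX]; linear_combination (2*ρ - 3) * hT + (-9*s) * hρ
        · rw [evalGY]; linear_combination hT + 3*s*hρ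
        · rw [evalGZ]; ring
      rcases mul_eq_zero.mp hfac with hT | hT
      · exact main r hroot hT
      · refine main (1 - r) (by linear_combination hroot) (by linear_combination hT)
end

section
/- Let k be an algebraically closed field whose characteristic is neither 2 nor 3, and let α in k satisfy α^2 + 11α - 1 = 0. Let F = (Y^2 - Z^2)(X + Y) + α(X^2 - Z^2)(Y - X) in k[X,Y,Z]. Then there is a unique y0 in k satisfying both y0^2 = y0 + 1 and 5·y0 + 3 + α = 0; and a nonzero triple (x,y,z) in k^3 is a common zero of F, ∂F/∂X, ∂F/∂Y, ∂F/∂Z if and only if (x,y,z) is a nonzero scalar multiple of (1, y0, 0). In particular, the cubic curve {F = 0} has exactly one singular point. -/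
open MvPolynomial

/-!
On the line `z = 0` the partial derivatives `∂F/∂X`, `∂F/∂Y` at `(1, t, 0)` are
`t² + α(2t - 3)` and `3t² + 2t + α`; the combination `(2t - 3)·∂F/∂Y - ∂F/∂X = 6t(t² - t - 1)`
forces `t² = t + 1`, and then `∂F/∂Y - 3(t² - t - 1) = 5t + 3 + α` pins `t` down to the unique
`y0`. Off that line, `∂F/∂Z = 0` puts the point on the line `(1 - α)x + (1 + α)y = 0`, where the
other two partials together with `α² + 11α = 1` force `24z² = 0`.
-/

section Evaluation

variable {k : Type*} [CommRing k] (s t x y z : k)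

lemma eval_Gpencil :
    eval ![x, y, z] (Gpencil k s t) =
      s * ((y ^ 2 - z ^ 2) * (x + y)) + t * ((x ^ 2 - z ^ 2) * (y - x)) := by
  simp [Gpencil]
  ring

lemma eval_pderiv_zero_Gpencil :
    eval ![x, y, z] (pderiv 0 (Gpencil k s t)) =
      s * (y ^ 2 - z ^ 2) + t * (2 * x * (y - x) - (x ^ 2 - z ^ 2)) := by
  simp [Gpencil]
  ring

lemma eval_pderiv_one_Gpencil :
    eval ![x, y, z] (pderiv 1 (Gpencil k s t)) =
      s * (2 * y * (x + y) + (y ^ 2 - z ^ 2)) + t * (x ^ 2 - z ^ 2) := by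
  simp [Gpencil]
  ring

lemma eval_pderiv_two_Gpencil :
    eval ![x, y, z] (pderiv 2 (Gpencil k s t)) =
      -(s * (2 * z * (x + y)) + t * (2 * z * (y - x))) := by
  simp [Gpencil]
  ring

end Evaluation

section SingularPoint

variable {k : Type*} [Field k] {α : k}

lemma existsUnique_golden_root (hα : α ^ 2 + 11 * α - 1 = 0) :
    ∃! y0 : k, y0 ^ 2 = y0 + 1 ∧ 5 * y0 + 3 + α = 0 := by
  by_cases h5 : (5 : k) = 0
  · -- In characteristic 5 both `α² + 11α - 1` and `y² - y - 1` are perfect squares.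
    have hα3 : α = -3 := by
      have hsq : (α + 3) ^ 2 = 0 := by linear_combination hα - (α - 2) * h5
      linear_combination pow_eq_zero_iff two_ne_zero |>.mp hsq
    refine ⟨3, ⟨by linear_combination h5, by linear_combination hα3 + 3 * h5⟩, ?_⟩
    rintro y ⟨hy, -⟩
    have hsq : (y - 3) ^ 2 = 0 := by linear_combination hy + (2 - y) * h5
    linear_combination pow_eq_zero_iff two_ne_zero |>.mp hsq
  · -- Otherwise `α = -5y - 3` and `α² + 11α - 1 = 25(y² - y - 1)`.
    refine ⟨-(3 + α) / 5, ⟨?_, ?_⟩, ?_⟩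
    · field_simp
      linear_combination hα
    · field_simp
      ring
    · rintro y ⟨-, hy⟩
      field_simp
      linear_combination hy

lemma eq_zero_of_partials_eq_zero (h2 : (2 : k) ≠ 0) (h3 : (3 : k) ≠ 0)
    (hα : α ^ 2 + 11 * α - 1 = 0) {x y z : k}
    (hX : y ^ 2 - z ^ 2 + α * (2 * x * (y - x) - (x ^ 2 - z ^ 2)) = 0)
    (hY : 2 * y * (x + y) + (y ^ 2 - z ^ 2) + α * (x ^ 2 - z ^ 2) = 0)
    (hZ : 2 * z * (x + y) + α * (2 * z * (y - x)) = 0) :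
    z = 0 := by
  have hline : z * ((1 - α) * x + (1 + α) * y) = 0 := by
    refine (mul_eq_zero.mp ?_).resolve_left h2
    linear_combination hZ
  refine (mul_eq_zero.mp hline).elim id fun hL => ?_
  have h24 : (2 * 2 * 2 * 3 : k) * z ^ 2 = 0 := by
    linear_combination (-74 - 7 * α) * hX + (40 + 3 * α) * hY +
      (-(42 + 4 * α) * y - (26 + 2 * α) * x) * hL +
      (10 * z ^ 2 + 4 * y ^ 2 + 12 * x * y - 26 * x ^ 2) * hα
  simpa [h2, h3] using h24

lemma golden_of_affine_partials_eq_zero (h2 : (2 : k) ≠ 0) (h3 : (3 : k) ≠ 0) (hα0 : α ≠ 0)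
    {t : k} (hX : t ^ 2 + α * (2 * t - 3) = 0) (hY : 3 * t ^ 2 + 2 * t + α = 0) :
    t ^ 2 = t + 1 ∧ 5 * t + 3 + α = 0 := by
  have ht : t ≠ 0 := by
    rintro rfl
    exact hα0 (by linear_combination hY)
  have hcubic : (2 * 3 * t) * (t ^ 2 - t - 1) = 0 := by
    linear_combination (2 * t - 3) * hY - hX
  have hgolden : t ^ 2 - t - 1 = 0 := by simpa [h2, h3, ht] using hcubic
  exact ⟨by linear_combination hgolden, by linear_combination hY - 3 * hgolden⟩

end SingularPoint

theorem stmt_2_general (k : Type*) [Field k]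
    (h2 : ringChar k ≠ 2) (h3 : ringChar k ≠ 3)
    (α : k) (hα : α ^ 2 + 11 * α - 1 = 0) :
    (∃! y0 : k, y0 ^ 2 = y0 + 1 ∧ 5 * y0 + 3 + α = 0) ∧
    (∀ y0 : k, y0 ^ 2 = y0 + 1 → 5 * y0 + 3 + α = 0 →
      ∀ x y z : k, ¬(x = 0 ∧ y = 0 ∧ z = 0) →
        ((eval ![x, y, z] (Gpencil k 1 α) = 0 ∧
          eval ![x, y, z] (pderiv 0 (Gpencil k 1 α)) = 0 ∧
          eval ![x, y, z] (pderiv 1 (Gpencil k 1 α)) = 0 ∧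
          eval ![x, y, z] (pderiv 2 (Gpencil k 1 α)) = 0) ↔
         (∃ c : k, c ≠ 0 ∧ x = c * 1 ∧ y = c * y0 ∧ z = c * 0))) := by
  have h2' : (2 : k) ≠ 0 := Ring.two_ne_zero h2
  have h3' : (3 : k) ≠ 0 := fun h =>
    h3 (CharP.ringChar_of_prime_eq_zero Nat.prime_three (by exact_mod_cast h))
  have hα0 : α ≠ 0 := by
    rintro rfl
    norm_num at hα
  refine ⟨existsUnique_golden_root hα, fun y0 hy0 hy0α x y z hxyz => ?_⟩
  simp only [eval_Gpencil, eval_pderiv_zero_Gpencil, eval_pderiv_one_Gpencil,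
    eval_pderiv_two_Gpencil, one_mul, neg_eq_zero]
  constructor
  · rintro ⟨-, hX, hY, hZ⟩
    obtain rfl := eq_zero_of_partials_eq_zero h2' h3' hα hX hY hZ
    have hx : x ≠ 0 := by
      rintro rfl
      exact hxyz ⟨rfl, pow_eq_zero_iff two_ne_zero |>.mp (by linear_combination hX), rfl⟩
    obtain ⟨t, rfl⟩ : ∃ t, y = x * t := ⟨y / x, by field_simp⟩
    have hx2 : x ^ 2 ≠ 0 := pow_ne_zero 2 hx
    have hX₁ : t ^ 2 + α * (2 * t - 3) = 0 := mul_left_cancel₀ hx2 (by linear_combination hX)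
    have hY₁ : 3 * t ^ 2 + 2 * t + α = 0 := mul_left_cancel₀ hx2 (by linear_combination hY)
    have hgolden := golden_of_affine_partials_eq_zero h2' h3' hα0 hX₁ hY₁
    obtain rfl := (existsUnique_golden_root hα).unique hgolden ⟨hy0, hy0α⟩
    exact ⟨x, hx, by ring, rfl, by ring⟩
  · rintro ⟨c, -, rfl, rfl, rfl⟩
    refine ⟨?_, ?_, ?_, by ring⟩
    · linear_combination (c ^ 3 * (y0 - 1)) * hy0α + (c ^ 3 * (y0 - 3)) * hy0
    · linear_combination (c ^ 2 * (2 * y0 - 3)) * hy0α - (9 * c ^ 2) * hy0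
    · linear_combination c ^ 2 * hy0α + (3 * c ^ 2) * hy0

/-- Let `k` be an algebraically closed field of characteristic neither 2 nor 3, and let
`α ∈ k` satisfy `α² + 11α - 1 = 0`. Let `F = (Y² - Z²)(X + Y) + α(X² - Z²)(Y - X)`.
Then there is a unique `y0 ∈ k` with `y0² = y0 + 1` and `5y0 + 3 + α = 0`; and a nonzero
triple `(x,y,z)` is a common zero of `F` and its three partial derivatives if and only if
`(x,y,z)` is a nonzero scalar multiple of `(1, y0, 0)`. -/
theorem stmt_2 (k : Type*) [Field k] [IsAlgClosed k]
    (h2 : ringChar k ≠ 2) (h3 : ringChar k ≠ 3)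
    (α : k) (hα : α ^ 2 + 11 * α - 1 = 0) :
    (∃! y0 : k, y0 ^ 2 = y0 + 1 ∧ 5 * y0 + 3 + α = 0) ∧
    (∀ y0 : k, y0 ^ 2 = y0 + 1 → 5 * y0 + 3 + α = 0 →
      ∀ x y z : k, ¬(x = 0 ∧ y = 0 ∧ z = 0) →
        ((eval ![x, y, z] (Gpencil k 1 α) = 0 ∧
          eval ![x, y, z] (pderiv 0 (Gpencil k 1 α)) = 0 ∧
          eval ![x, y, z] (pderiv 1 (Gpencil k 1 α)) = 0 ∧
          eval ![x, y, z] (pderiv 2 (Gpencil k 1 α)) = 0) ↔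
         (∃ c : k, c ≠ 0 ∧ x = c * 1 ∧ y = c * y0 ∧ z = c * 0))) :=
  stmt_2_general k h2 h3 α hα
end

section
/- Let k be an algebraically closed field of characteristic 5 and let F = (Y^2 - Z^2)(X + Y) + 2(X^2 - Z^2)(Y - X) in k[X,Y,Z]. Then: (i) α = 2 is the unique element of k with α^2 + 11α - 1 = 0; (ii) a nonzero triple (x,y,z) in k^3 is a common zero of F, ∂F/∂X, ∂F/∂Y, ∂F/∂Z if and only if (x,y,z) is a nonzero scalar multiple of (1, 3, 0); (iii) in k[u,w] one has F(1, 3 + u, w) = 2·w^2 + u^3 + 2·u·w^2. In particular the unique singular point of the cubic {F = 0} is a cusp: the tangent cone 2w^2 is a double line. -/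
open MvPolynomial

/-- Let `k` be an algebraically closed field of characteristic 5 and let
`F = (Y² - Z²)(X + Y) + 2(X² - Z²)(Y - X)`. Then (i) `α = 2` is the unique root of
`α² + 11α - 1 = 0` in `k`; (ii) the nonzero common zeros of `F` and its partial derivatives
are exactly the nonzero scalar multiples of `(1, 3, 0)`; (iii) in `k[u,w]` one has
`F(1, 3 + u, w) = 2w² + u³ + 2uw²` (so the singular point is a cusp with tangent cone `2w²`). -/
theorem stmt_5 (k : Type*) [Field k] [IsAlgClosed k] [CharP k 5] :
    (∀ α : k, α ^ 2 + 11 * α - 1 = 0 ↔ α = 2) ∧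
    (∀ x y z : k, ¬(x = 0 ∧ y = 0 ∧ z = 0) →
      ((eval ![x, y, z] (Gpencil k 1 2) = 0 ∧
        eval ![x, y, z] (pderiv 0 (Gpencil k 1 2)) = 0 ∧
        eval ![x, y, z] (pderiv 1 (Gpencil k 1 2)) = 0 ∧
        eval ![x, y, z] (pderiv 2 (Gpencil k 1 2)) = 0) ↔
       (∃ c : k, c ≠ 0 ∧ x = c * 1 ∧ y = c * 3 ∧ z = c * 0))) ∧
    (aeval ![(1 : MvPolynomial (Fin 2) k), C 3 + X 0, X 1] (Gpencil k 1 2) =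
      C 2 * X 1 ^ 2 + X 0 ^ 3 + C 2 * X 0 * X 1 ^ 2) := by
  have h5 : (5 : k) = 0 := by exact_mod_cast CharP.cast_eq_zero k 5
  refine ⟨?_, ?_, ?_⟩
  · intro α
    constructor
    · intro h
      have hsq : (α - 2) ^ 2 = 0 := by linear_combination h - (3 * α - 1) * h5
      have := pow_eq_zero_iff (n := 2) (by norm_num) |>.mp hsq
      exact sub_eq_zero.mp this
    · rintro rfl
      linear_combination 5 * h5
  · intro x y z hne
    have eF : eval ![x, y, z] (Gpencil k 1 2) =
        (y ^ 2 - z ^ 2) * (x + y) + 2 * (x ^ 2 - z ^ 2) * (y - x) := by simp [Gpencil]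
    have eFx : eval ![x, y, z] (pderiv 0 (Gpencil k 1 2)) =
        (y ^ 2 - z ^ 2) + 2 * (2 * x * (y - x) - (x ^ 2 - z ^ 2)) := by
      simp [Gpencil, pderiv_mul, pderiv_pow]; ring
    have eFy : eval ![x, y, z] (pderiv 1 (Gpencil k 1 2)) =
        2 * y * (x + y) + (y ^ 2 - z ^ 2) + 2 * (x ^ 2 - z ^ 2) := by
      simp [Gpencil, pderiv_mul, pderiv_pow]; ring
    have eFz : eval ![x, y, z] (pderiv 2 (Gpencil k 1 2)) =
        -2 * z * (x + y) + 2 * (-2 * z) * (y - x) := by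
      simp [Gpencil, pderiv_mul, pderiv_pow]; ring
    rw [eF, eFx, eFy, eFz]
    constructor
    · rintro ⟨hF, hFx, hFy, hFz⟩
      have hfac : z * (2 * x - y) = 0 := by linear_combination hFz + z * y * h5
      rcases mul_eq_zero.mp hfac with hz | hxy
      · subst hz
        have hx : x ≠ 0 := by
          rintro rfl
          have hy2 : y ^ 2 = 0 := by linear_combination hFx
          exact hne ⟨rfl, pow_eq_zero_iff (n := 2) (by norm_num) |>.mp hy2, rfl⟩
        refine ⟨x, hx, by ring, ?_, by ring⟩
        have hsq : (y + 2 * x) ^ 2 = 0 := by linear_combination hFx + 2 * x ^ 2 * h5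
        have hy : y + 2 * x = 0 := pow_eq_zero_iff (n := 2) (by norm_num) |>.mp hsq
        linear_combination hy - x * h5
      · exfalso
        have hz2 : z ^ 2 = 0 := by
          linear_combination 3 * hFx - hFy - (2 * x * y - 4 * x ^ 2 + z ^ 2) * h5
        have hz : z = 0 := pow_eq_zero_iff (n := 2) (by norm_num) |>.mp hz2
        subst hz
        have hx2 : x ^ 2 = 0 := by
          linear_combination hFx + (x - 4 * y) * hxy + (x ^ 2 + x * y - y ^ 2) * h5
        have hx : x = 0 := pow_eq_zero_iff (n := 2) (by norm_num) |>.mp hx2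
        subst hx
        exact hne ⟨rfl, by linear_combination -hxy, rfl⟩
    · rintro ⟨c, hc, rfl, rfl, rfl⟩
      refine ⟨by linear_combination 8 * c ^ 3 * h5, by linear_combination 3 * c ^ 2 * h5,
        by linear_combination 7 * c ^ 2 * h5, by ring⟩
  · have h5' : (5 : MvPolynomial (Fin 2) k) = 0 := by
      rw [show (5 : MvPolynomial (Fin 2) k) = C 5 by simp [map_ofNat], h5, map_zero]
    simp only [Gpencil, map_add, map_mul, map_sub, map_pow, aeval_X, aeval_C, map_one,
      map_ofNat, algebraMap_eq, Matrix.cons_val_zero, Matrix.cons_val_one, Matrix.head_cons,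
      Matrix.cons_val_two, Matrix.tail_cons]
    linear_combination (8 + 7 * (X 0 : MvPolynomial (Fin 2) k) + 2 * X 0 ^ 2 - 2 * X 1 ^ 2
      - X 0 * X 1 ^ 2) * h5'
end

section
/- Let k be an algebraically closed field whose characteristic is neither 2 nor 3, and let α in k satisfy α^2 + 11α - 1 = 0. Then the homogeneous cubic F = (Y^2 - Z^2)(X + Y) + α(X^2 - Z^2)(Y - X) is irreducible in k[X,Y,Z]. -/
/-!
As a polynomial in `Z` over `k[X,Y]`, `G_{s,t} = A Z² + B` with `A` a nonzero linear form and
`B` a cubic. A primitive `a Z² + b` over a domain can only factor as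
`(f₁ Z + f₀)(g₁ Z + g₀)`, which forces `-ab = (f₀ g₁)²`. Here `A` is irreducible and does not
divide `B`, so `A Z² + B` is primitive, and `-AB` is not a square: on a line meeting `A = 0`
transversally at a point where `B ≠ 0`, it vanishes to order one.
-/

open MvPolynomial

namespace Polynomial

variable {R : Type*} [CommRing R]

theorem isPrimitive_C_mul_X_pow_add_C {a b : R} {n : ℕ} (hn : n ≠ 0) (hab : IsRelPrime a b) :
    (C a * X ^ n + C b).IsPrimitive := by
  intro r hr
  rw [C_dvd_iff_dvd_coeff] at hr
  exact hab (by simpa [coeff_C, hn] using hr n) (by simpa [coeff_C, hn.symm] using hr 0)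

variable [IsDomain R]

theorem not_isSquare_X_mul {q : R[X]} (hq : q.eval 0 ≠ 0) : ¬IsSquare (X * q) := by
  rintro ⟨r, hr⟩
  obtain ⟨w, rfl⟩ : X ∣ r := prime_X.dvd_or_dvd (hr ▸ dvd_mul_right X q) |>.elim id id
  have hqw : q = X * (w * w) := mul_left_cancel₀ X_ne_zero (by rw [hr]; ring)
  simp [hqw] at hq

theorem irreducible_C_mul_X_sq_add_C {a b : R} (hprim : (C a * X ^ 2 + C b).IsPrimitive)
    (hsq : ¬IsSquare (-(a * b))) : Irreducible (C a * X ^ 2 + C b) := by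
  have ha : a ≠ 0 := by rintro rfl; exact hsq ⟨0, by simp⟩
  have hdeg : (C a * X ^ 2 + C b).natDegree = 2 := by compute_degree!
  refine ⟨fun hu => by simpa [hdeg] using natDegree_eq_zero_of_isUnit hu, fun f g hfg => ?_⟩
  have hf0 : f ≠ 0 := by rintro rfl; simp_all
  have hg0 : g ≠ 0 := by rintro rfl; simp_all
  have hsum : f.natDegree + g.natDegree = 2 := by rw [← natDegree_mul hf0 hg0, ← hfg, hdeg]
  have isUnit_of_natDegree_eq_zero {h : R[X]} (hh : h ∣ C a * X ^ 2 + C b)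
      (h0 : h.natDegree = 0) : IsUnit h := by
    rw [eq_C_of_natDegree_eq_zero h0] at hh ⊢
    exact isUnit_C.2 (hprim _ hh)
  by_cases hf : f.natDegree = 0
  · exact .inl (isUnit_of_natDegree_eq_zero ⟨g, hfg⟩ hf)
  by_cases hg : g.natDegree = 0
  · exact .inr (isUnit_of_natDegree_eq_zero ⟨f, by rw [hfg, mul_comm]⟩ hg)
  rw [eq_X_add_C_of_natDegree_le_one (p := f) (by omega),
    eq_X_add_C_of_natDegree_le_one (p := g) (by omega)] at hfg
  set f₁ := f.coeff 1
  set f₀ := f.coeff 0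
  set g₁ := g.coeff 1
  set g₀ := g.coeff 0
  have hexpand : (C f₁ * X + C f₀) * (C g₁ * X + C g₀) =
      C (f₁ * g₁) * X ^ 2 + C (f₁ * g₀ + f₀ * g₁) * X + C (f₀ * g₀) := by
    simp only [C_mul, C_add]
    ring
  rw [hexpand] at hfg
  have h2 := congrArg (coeff · 2) hfg
  have h1 := congrArg (coeff · 1) hfg
  have h0 := congrArg (coeff · 0) hfg
  simp only [coeff_add, coeff_C_mul, coeff_X_pow, coeff_X, coeff_C] at h2 h1 h0
  simp only [↓reduceIte, mul_one, mul_zero, add_zero, zero_add, one_ne_zero, OfNat.ofNat_ne_zero,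
    OfNat.one_ne_ofNat, OfNat.zero_ne_ofNat] at h2 h1 h0
  exact (hsq ⟨f₀ * g₁, by rw [h2, h0]; linear_combination (f₀ * g₁) * h1⟩).elim

end Polynomial

theorem MvPolynomial.irreducible_C_mul_X_add_C_mul_X {σ k : Type*} [Field k] {i j : σ}
    (hij : i ≠ j) {a b : k} (hab : a ≠ 0 ∨ b ≠ 0) : Irreducible (C a * X i + C b * X j) := by
  classical
  wlog ha : a ≠ 0 generalizing a b i j
  · rw [add_comm]
    exact this hij.symm hab.symm (hab.resolve_left ha)
  refine irreducible_mul_X_add _ _ i (by simpa using ha) (by simp) ?_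
    (ha.isUnit.map C).isRelPrime_left
  intro hi
  simpa [hij] using vars_mul _ _ hi

namespace Gpencil

section CommRing

variable {k : Type*} [CommRing k] (s t : k)

noncomputable def polynomialInZ :
    MvPolynomial (Fin 3) k ≃ₐ[k] Polynomial (MvPolynomial (Fin 2) k) :=
  (renameEquiv k (finSuccEquiv' 2)).trans (optionEquivLeft k (Fin 2))

noncomputable def coeffZSq : MvPolynomial (Fin 2) k := C (t - s) * X 0 + C (-(s + t)) * X 1

noncomputable def coeffZZero : MvPolynomial (Fin 2) k :=
  C s * X 1 ^ 2 * (X 0 + X 1) + C t * X 0 ^ 2 * (X 1 - X 0)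

theorem polynomialInZ_Gpencil :
    polynomialInZ (Gpencil k s t) =
      Polynomial.C (coeffZSq s t) * Polynomial.X ^ 2 + Polynomial.C (coeffZZero s t) := by
  have h0 : finSuccEquiv' (2 : Fin 3) 0 = some 0 := rfl
  have h1 : finSuccEquiv' (2 : Fin 3) 1 = some 1 := rfl
  have h2 : finSuccEquiv' (2 : Fin 3) 2 = none := rfl
  simp only [polynomialInZ, Gpencil, coeffZSq, coeffZZero, AlgEquiv.trans_apply,
    renameEquiv_apply, map_add, map_sub, map_mul, map_pow, map_neg, rename_X, algHom_C,
    algebraMap_eq, h0, h1, h2, optionEquivLeft_C, optionEquivLeft_X_some, optionEquivLeft_X_none]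
  ring

/-- Restriction to a line crossing `coeffZSq s t = 0` transversally at `τ = 0`. -/
noncomputable def restrictToLine : MvPolynomial (Fin 2) k →ₐ[k] Polynomial k :=
  aeval ![Polynomial.C (s + t) + Polynomial.X, Polynomial.C (t - s) + Polynomial.X]

theorem restrictToLine_coeffZSq :
    restrictToLine s t (coeffZSq s t) = Polynomial.C (-2 * s) * Polynomial.X := by
  simp only [restrictToLine, coeffZSq, map_add, map_neg, map_mul, algHom_C,
    Polynomial.algebraMap_eq, aeval_X, Matrix.cons_val_zero, Matrix.cons_val_one,
    Matrix.cons_val_fin_one, Polynomial.C_sub, Polynomial.C_ofNat]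
  ring

theorem eval_zero_restrictToLine_coeffZZero :
    (restrictToLine s t (coeffZZero s t)).eval 0 = -8 * s ^ 2 * t ^ 2 := by
  simp only [restrictToLine, coeffZZero, map_add, map_sub, map_mul, map_pow, algHom_C,
    Polynomial.algebraMap_eq, aeval_X, Matrix.cons_val_zero, Matrix.cons_val_one,
    Matrix.cons_val_fin_one, Polynomial.eval_add, Polynomial.eval_sub, Polynomial.eval_mul,
    Polynomial.eval_pow, Polynomial.eval_C, Polynomial.eval_X]
  ring

end CommRing

variable {k : Type*} [Field k] {s t : k}

theorem eval_zero_restrictToLine_coeffZZero_ne_zero (h2 : (2 : k) ≠ 0) (hs : s ≠ 0)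
    (ht : t ≠ 0) : (restrictToLine s t (coeffZZero s t)).eval 0 ≠ 0 := by
  have h8 : (8 : k) ≠ 0 := by simpa [show (8 : k) = 2 ^ 3 by norm_num] using h2
  simp [eval_zero_restrictToLine_coeffZZero, h8, hs, ht]

theorem irreducible_coeffZSq (h2 : (2 : k) ≠ 0) (hs : s ≠ 0) : Irreducible (coeffZSq s t) := by
  refine irreducible_C_mul_X_add_C_mul_X (by decide) ?_
  by_contra! h
  have h2s : 2 * s = 0 := by linear_combination -h.1 - h.2
  exact hs ((mul_eq_zero.1 h2s).resolve_left h2)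

theorem not_coeffZSq_dvd_coeffZZero (h2 : (2 : k) ≠ 0) (hs : s ≠ 0) (ht : t ≠ 0) :
    ¬coeffZSq s t ∣ coeffZZero s t := by
  intro hdvd
  have := Polynomial.eval_dvd (x := 0) (map_dvd (restrictToLine s t) hdvd)
  simp [restrictToLine_coeffZSq, eval_zero_restrictToLine_coeffZZero_ne_zero h2 hs ht] at this

theorem not_isSquare_neg_coeffZSq_mul_coeffZZero (h2 : (2 : k) ≠ 0) (hs : s ≠ 0) (ht : t ≠ 0) :
    ¬IsSquare (-(coeffZSq s t * coeffZZero s t)) := by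
  intro hsq
  have hmap : restrictToLine s t (-(coeffZSq s t * coeffZZero s t)) =
      Polynomial.X * (Polynomial.C (2 * s) * restrictToLine s t (coeffZZero s t)) := by
    rw [map_neg, map_mul, restrictToLine_coeffZSq]
    simp only [Polynomial.C_mul, Polynomial.C_neg, Polynomial.C_ofNat]
    ring
  refine Polynomial.not_isSquare_X_mul ?_ (hmap ▸ hsq.map (restrictToLine s t))
  simp [eval_zero_restrictToLine_coeffZZero_ne_zero h2 hs ht, h2, hs]

end Gpencil

open Gpencil in
theorem irreducible_Gpencil {k : Type*} [Field k] {s t : k} (h2 : (2 : k) ≠ 0) (hs : s ≠ 0)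
    (ht : t ≠ 0) : Irreducible (Gpencil k s t) := by
  refine .of_map (f := polynomialInZ) ?_
  rw [polynomialInZ_Gpencil]
  have hrel : IsRelPrime (coeffZSq s t) (coeffZZero s t) :=
    (irreducible_coeffZSq h2 hs).isRelPrime_iff_not_dvd.2 (not_coeffZSq_dvd_coeffZZero h2 hs ht)
  exact Polynomial.irreducible_C_mul_X_sq_add_C
    (Polynomial.isPrimitive_C_mul_X_pow_add_C two_ne_zero hrel)
    (not_isSquare_neg_coeffZSq_mul_coeffZZero h2 hs ht)

theorem stmt_6_general (k : Type*) [Field k]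
    (h2 : ringChar k ≠ 2)
    (α : k) (hα : α ^ 2 + 11 * α - 1 = 0) :
    Irreducible (Gpencil k 1 α) := by
  have hα0 : α ≠ 0 := by
    rintro rfl
    norm_num at hα
  exact irreducible_Gpencil (Ring.two_ne_zero h2) one_ne_zero hα0

/-- Let `k` be an algebraically closed field of characteristic neither 2 nor 3, and let
`α ∈ k` satisfy `α² + 11α - 1 = 0`. Then the homogeneous cubic
`F = (Y² - Z²)(X + Y) + α(X² - Z²)(Y - X)` is irreducible in `k[X,Y,Z]`. -/
theorem stmt_6 (k : Type*) [Field k] [IsAlgClosed k]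
    (h2 : ringChar k ≠ 2) (h3 : ringChar k ≠ 3)
    (α : k) (hα : α ^ 2 + 11 * α - 1 = 0) :
    Irreducible (Gpencil k 1 α) :=
  stmt_6_general k h2 α hα
end

section
/- Let k be a perfect field of characteristic 5, let W(k) be the ring of Witt vectors of k, and let K be the fraction field of W(k). Then no element x of K satisfies x^2 - 123x + 1 = 0, no element x of K satisfies 121x^2 - 121x - 1 = 0, and no element x of K satisfies x^2 + 121x - 121 = 0. -/
/-!
Each of the three quadratics has discriminant `15125 = 5 * 55 ^ 2`, so a root in `K` would make
`5` a square in `K`. Since `W(k)` is integrally closed, `5` would then be a square in `W(k)`,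
which is impossible because `5` is irreducible there (it is the uniformizer of the DVR `W(k)`).
-/

theorem IsIntegrallyClosed.isSquare_of_isSquare_algebraMap {R K : Type*} [CommRing R]
    [IsIntegrallyClosed R] [CommRing K] [Algebra R K] [IsFractionRing R K] {a : R}
    (h : IsSquare (algebraMap R K a)) : IsSquare a := by
  obtain ⟨y, hy⟩ := h
  obtain ⟨z, rfl⟩ := exists_algebraMap_eq_of_isIntegral_pow (R := R) (x := y) two_pos
    (by rw [sq, ← hy]; exact isIntegral_algebraMap)
  exact ⟨z, IsFractionRing.injective R K (by rw [hy, map_mul])⟩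

theorem isSquare_of_isSquare_mul_sq {K : Type*} [Field K] {a c : K} (hc : c ≠ 0)
    (h : IsSquare (a * c ^ 2)) : IsSquare a := by
  simpa [hc] using h.div (IsSquare.sq c)

theorem isSquare_discrim_of_quadratic_eq_zero {R : Type*} [CommRing R] {a b c x : R}
    (h : a * (x * x) + b * x + c = 0) : IsSquare (discrim a b c) :=
  ⟨_, (discrim_eq_sq_of_quadratic_eq_zero h).trans (sq _)⟩

namespace WittVector

variable {p : ℕ} [hp : Fact p.Prime]

instance charZero {k : Type*} [Field k] [CharP k p] : CharZero (WittVector p k) := by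
  refine charZero_of_inj_zero fun n hn => ?_
  by_contra hn0
  obtain ⟨v, m, hpm, rfl⟩ := Nat.exists_eq_pow_mul_and_not_dvd hn0 p hp.out.ne_one
  have hm : (m : WittVector p k) ≠ 0 := fun h => by
    simpa [CharP.cast_eq_zero_iff k p, hpm] using congrArg constantCoeff h
  exact mul_ne_zero (pow_ne_zero v (p_nonzero p k)) hm (by exact_mod_cast hn)

theorem not_isSquare_natCast_of_isFractionRing (k : Type*) [Field k] [CharP k p] [PerfectField k]
    (K : Type*) [Field K] [Algebra (WittVector p k) K] [IsFractionRing (WittVector p k) K] :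
    ¬IsSquare (p : K) := fun h =>
  (irreducible (k := k) p).not_isSquare <|
    IsIntegrallyClosed.isSquare_of_isSquare_algebraMap (R := WittVector p k) (K := K)
      (by rwa [map_natCast])

end WittVector

/-- Let `k` be a perfect field of characteristic 5, `W(k)` the ring of (5-typical) Witt
vectors of `k`, and `K` the fraction field of `W(k)`. Then no element `x` of `K` satisfies
`x² - 123x + 1 = 0`, none satisfies `121x² - 121x - 1 = 0`, and none satisfies
`x² + 121x - 121 = 0`. -/
theorem stmt_11 (k : Type*) [Field k] [CharP k 5] [PerfectField k]
    [Fact (Nat.Prime 5)]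
    (K : Type*) [Field K] [Algebra (WittVector 5 k) K]
    [IsFractionRing (WittVector 5 k) K] :
    (¬∃ x : K, x ^ 2 - 123 * x + 1 = 0) ∧
    (¬∃ x : K, 121 * x ^ 2 - 121 * x - 1 = 0) ∧
    (¬∃ x : K, x ^ 2 + 121 * x - 121 = 0) := by
  have : CharZero K :=
    charZero_of_injective_algebraMap (IsFractionRing.injective (WittVector 5 k) K)
  have no_root : ∀ a b c : K, discrim a b c = 5 * 55 ^ 2 → ¬∃ x, a * (x * x) + b * x + c = 0 :=
    fun a b c hd ⟨x, hx⟩ => WittVector.not_isSquare_natCast_of_isFractionRing k K <| by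
      exact_mod_cast isSquare_of_isSquare_mul_sq (by norm_num)
        (hd ▸ isSquare_discrim_of_quadratic_eq_zero hx)
  refine ⟨?_, ?_, ?_⟩ <;> rintro ⟨x, hx⟩
  · exact no_root 1 (-123) 1 (by norm_num [discrim]) ⟨x, by linear_combination hx⟩
  · exact no_root 121 (-121) (-1) (by norm_num [discrim]) ⟨x, by linear_combination hx⟩
  · exact no_root 1 121 (-121) (by norm_num [discrim]) ⟨x, by linear_combination hx⟩
end
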